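/- arXiv:1809.05120 — 7 statements merged into one kernel-verified Lean document; each statement's English description precedes it below -/
import Mathlib

section
/- Let ρ : ℕ → ℝ be any nonnegative, nonincreasing, convex (i.e. ρ_{t+2} − ρ_{t+1} ≥ ρ_{t+1} − ρ_t for all t) and summable sequence. Then for every discrete feasible strategy (p, I) with stopping CDF (P_t), the value ∑_{t=1}^∞ ρ_t · (1 − P_{t−1}) · p_t · V* is at most ∑_{t=1}^∞ ρ_t · (1 − c/Ī)^{t−1} · (c/Ī) · V*. Moreover the constant strategy p_t ≡ c/Ī, I_t ≡ 0 is a discrete feasible strategy whose value equals this bound. -/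
/-- A discrete feasible strategy for the relaxed dynamic information-acquisition
problem with per-period learning capacity `c` and target information measure `Ibar`:
`p t ∈ [0,1]` and `I t ≥ 0` for `t ≥ 1`, `I 1 = 0`, and the per-period capacity
constraint `(Ī − I_t)·p_t + (I_{t+1} − I_t)·(1 − p_t) ≤ c` for every `t ≥ 1`. -/
def DiscreteFeasible (c Ibar : ℝ) (p I : ℕ → ℝ) : Prop :=
  (∀ t, 1 ≤ t → p t ∈ Set.Icc (0:ℝ) 1) ∧
  (∀ t, 1 ≤ t → 0 ≤ I t) ∧
  I 1 = 0 ∧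
  (∀ t, 1 ≤ t → (Ibar - I t) * p t + (I (t+1) - I t) * (1 - p t) ≤ c)

/-- The stopping CDF of a strategy: `P 0 = 0` and `P t = P (t-1) + (1 - P (t-1)) * p t`. -/
def stoppingCDF (p : ℕ → ℝ) : ℕ → ℝ
  | 0 => 0
  | t + 1 => stoppingCDF p t + (1 - stoppingCDF p t) * p (t + 1)

/-- The value `∑_{t=1}^∞ ρ_t · (1 − P_{t−1}) · p_t · V*` of a strategy under
discount sequence `ρ`. -/
noncomputable def discreteValue (ρ p : ℕ → ℝ) (Vstar : ℝ) : ℝ :=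
  ∑' t : ℕ, ρ (t + 1) * (1 - stoppingCDF p t) * p (t + 1) * Vstar

open Finset

namespace ValueAux

variable {c Ibar : ℝ} {p I : ℕ → ℝ}

lemma survival_succ (p : ℕ → ℝ) (t : ℕ) :
    1 - stoppingCDF p (t + 1) = (1 - stoppingCDF p t) * (1 - p (t + 1)) := by
  show 1 - (stoppingCDF p t + (1 - stoppingCDF p t) * p (t + 1)) = _
  ring

lemma survival_mem (hp : ∀ t, 1 ≤ t → p t ∈ Set.Icc (0:ℝ) 1) (t : ℕ) :
    0 ≤ 1 - stoppingCDF p t ∧ 1 - stoppingCDF p t ≤ 1 := by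
  induction t with
  | zero => norm_num [stoppingCDF]
  | succ n ih =>
    obtain ⟨hp0, hp1⟩ := hp (n + 1) (by omega)
    rw [survival_succ]
    constructor
    · exact mul_nonneg ih.1 (by linarith)
    · nlinarith [ih.1, ih.2]

lemma keyA (h : DiscreteFeasible c Ibar p I) (T : ℕ) :
    Ibar * (1 - (1 - stoppingCDF p T)) + (1 - stoppingCDF p T) * I (T + 1)
      ≤ c * ∑ t ∈ range T, (1 - stoppingCDF p t) := by
  obtain ⟨hp, hI, hI1, hcon⟩ := h
  induction T with
  | zero => simp [stoppingCDF, hI1]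
  | succ n ih =>
    have hg := (survival_mem hp n).1
    have hstep := mul_le_mul_of_nonneg_left (hcon (n+1) (by omega)) hg
    rw [Finset.sum_range_succ, survival_succ]
    nlinarith [hstep, ih]

lemma key_sum (h : DiscreteFeasible c Ibar p I) (hc : 0 < c) (hcI : c < Ibar) :
    ∀ T, ∑ t ∈ range T, (1 - c / Ibar) ^ t ≤ ∑ t ∈ range T, (1 - stoppingCDF p t) := by
  have hIbar : 0 < Ibar := hc.trans hcI
  have hl1 : c / Ibar < 1 := (div_lt_one hIbar).mpr hcI
  intro T
  induction T with
  | zero => simp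
  | succ n ih =>
    have hA := keyA h n
    have hg0 := (survival_mem h.1 n).1
    have hGI : 0 ≤ (1 - stoppingCDF p n) * I (n + 1) :=
      mul_nonneg hg0 (h.2.1 (n+1) (by omega))
    have hP : stoppingCDF p n ≤ c / Ibar * ∑ t ∈ range n, (1 - stoppingCDF p t) := by
      rw [div_mul_eq_mul_div, le_div_iff₀ hIbar]
      nlinarith [hA, hGI]
    have hgeom : ∑ t ∈ range (n+1), (1 - c / Ibar) ^ t
        = 1 + (1 - c / Ibar) * ∑ t ∈ range n, (1 - c / Ibar) ^ t := by
      rw [Finset.sum_range_succ' (fun t => (1 - c / Ibar) ^ t) n, Finset.mul_sum]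
      simp [pow_succ, mul_comm]
      ring
    have hprod : 0 ≤ (1 - c / Ibar) *
        ((∑ t ∈ range n, (1 - stoppingCDF p t)) - ∑ t ∈ range n, (1 - c / Ibar) ^ t) :=
      mul_nonneg (by linarith) (by linarith)
    rw [hgeom, Finset.sum_range_succ (fun t => 1 - stoppingCDF p t) n]
    nlinarith [hP, hprod]

lemma abel_identity (ρ H : ℕ → ℝ) (hH0 : H 0 = 0) (n : ℕ) :
    ∑ t ∈ range (n+1), ρ (t+1) * (H t - H (t+1))
      = (∑ s ∈ range n, (ρ (s+2) - ρ (s+1)) * H (s+1)) - ρ (n+1) * H (n+1) := by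
  induction n with
  | zero => simp [Finset.sum_range_one, hH0]
  | succ m ih =>
    rw [Finset.sum_range_succ _ (m+1), ih, Finset.sum_range_succ _ m]
    ring

lemma abel_bound (ρ : ℕ → ℝ)
    (hρconv : ∀ t, ρ (t + 1) - ρ t ≤ ρ (t + 2) - ρ (t + 1))
    (H : ℕ → ℝ) (hH0 : H 0 = 0) (hC : ∀ T, 0 ≤ ∑ t ∈ range T, H t) (n : ℕ) :
    ∑ s ∈ range n, (ρ (s+2) - ρ (s+1)) * H (s+1)
      ≤ (ρ (n+2) - ρ (n+1)) * ∑ t ∈ range (n+1), H t := by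
  induction n with
  | zero => simp [Finset.sum_range_one, hH0]
  | succ m ih =>
    have hconv : ρ (m+2) - ρ (m+1) ≤ ρ (m+3) - ρ (m+2) := hρconv (m+1)
    have hCm : 0 ≤ ∑ t ∈ range (m+2), H t := hC (m+2)
    have h1 : (ρ (m+2) - ρ (m+1)) * ∑ t ∈ range (m+2), H t
        ≤ (ρ (m+3) - ρ (m+2)) * ∑ t ∈ range (m+2), H t :=
      mul_le_mul_of_nonneg_right hconv hCm
    rw [Finset.sum_range_succ _ m]
    have h2 : (ρ (m+2) - ρ (m+1)) * ∑ t ∈ range (m+2), H t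
        = (ρ (m+2) - ρ (m+1)) * (∑ t ∈ range (m+1), H t) + (ρ (m+2) - ρ (m+1)) * H (m+1) := by
      rw [Finset.sum_range_succ _ (m+1)]; ring
    linarith [ih]

lemma D_le (ρ H : ℕ → ℝ) (hρ0 : ∀ t, 0 ≤ ρ t) (hρdec : ∀ t, ρ (t + 1) ≤ ρ t)
    (hρconv : ∀ t, ρ (t + 1) - ρ t ≤ ρ (t + 2) - ρ (t + 1))
    (hH0 : H 0 = 0) (hHlb : ∀ t, -1 ≤ H t) (hC : ∀ T, 0 ≤ ∑ t ∈ range T, H t) :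
    ∀ T, ∑ t ∈ range T, ρ (t+1) * (H t - H (t+1)) ≤ ρ T := by
  intro T
  match T with
  | 0 => simpa using hρ0 0
  | n+1 =>
    rw [abel_identity ρ H hH0 n]
    have h1 := abel_bound ρ hρconv H hH0 hC n
    have h2 : (ρ (n+2) - ρ (n+1)) * ∑ t ∈ range (n+1), H t ≤ 0 := by
      have hd : ρ (n+2) ≤ ρ (n+1) := hρdec (n+1)
      nlinarith [hC (n+1)]
    have h3 : 0 ≤ ρ (n+1) * H (n+1) + ρ (n+1) := by
      have := mul_nonneg (hρ0 (n+1)) (by linarith [hHlb (n+1)] : (0:ℝ) ≤ H (n+1) + 1)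
      nlinarith
    linarith

end ValueAux

open Finset ValueAux in
theorem main_value_ineq
    (c Ibar Vstar : ℝ) (hc : 0 < c) (hcI : c < Ibar) (hV : 0 ≤ Vstar)
    (ρ : ℕ → ℝ) (hρ0 : ∀ t, 0 ≤ ρ t) (hρdec : ∀ t, ρ (t + 1) ≤ ρ t)
    (hρconv : ∀ t, ρ (t + 1) - ρ t ≤ ρ (t + 2) - ρ (t + 1)) (hρsum : Summable ρ) :
    (∀ p I : ℕ → ℝ, DiscreteFeasible c Ibar p I →
      (∑' t : ℕ, ρ (t + 1) * (1 - stoppingCDF p t) * p (t + 1) * Vstar) ≤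
        ∑' t : ℕ, ρ (t + 1) * (1 - c / Ibar) ^ t * (c / Ibar) * Vstar) := by
  have hIbar : 0 < Ibar := hc.trans hcI
  have hl0 : 0 < c / Ibar := div_pos hc hIbar
  have hl1 : c / Ibar < 1 := (div_lt_one hIbar).mpr hcI
  have hx0 : (0:ℝ) ≤ 1 - c / Ibar := by linarith
  have hpow : ∀ t : ℕ, 0 ≤ (1 - c / Ibar) ^ t ∧ (1 - c / Ibar) ^ t ≤ 1 :=
    fun t => ⟨pow_nonneg hx0 t, pow_le_one₀ hx0 (by linarith)⟩
  have hρshift : Summable (fun t => ρ (t + 1)) := (summable_nat_add_iff 1).mpr hρsum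
  intro p I hfeas
  set H : ℕ → ℝ := fun t => (1 - stoppingCDF p t) - (1 - c / Ibar) ^ t with hH
  have hH0 : H 0 = 0 := by simp [hH, stoppingCDF]
  have hHlb : ∀ t, -1 ≤ H t := by
    intro t
    have := (survival_mem hfeas.1 t).1
    have := (hpow t).2
    simp only [hH]; linarith
  have hC : ∀ T, 0 ≤ ∑ t ∈ range T, H t := by
    intro T
    have := key_sum hfeas hc hcI T
    simp only [hH, Finset.sum_sub_distrib] at this ⊢
    linarith
  have hD := D_le ρ H hρ0 hρdec hρconv hH0 hHlb hC
  set a : ℕ → ℝ := fun t => ρ (t + 1) * (1 - stoppingCDF p t) * p (t + 1) with ha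
  set b : ℕ → ℝ := fun t => ρ (t + 1) * (1 - c / Ibar) ^ t * (c / Ibar) with hb
  have hab : ∀ t, a t - b t = ρ (t+1) * (H t - H (t+1)) := by
    intro t
    simp only [ha, hb, hH, survival_succ p t, pow_succ]
    ring
  have haS : Summable a := by
    apply Summable.of_nonneg_of_le _ _ hρshift
    · intro t
      exact mul_nonneg (mul_nonneg (hρ0 _) (survival_mem hfeas.1 t).1)
        (hfeas.1 (t+1) (by omega)).1
    · intro t
      have h1 := survival_mem hfeas.1 t
      have h2 := hfeas.1 (t+1) (by omega)
      have : (1 - stoppingCDF p t) * p (t + 1) ≤ 1 := by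
        nlinarith [h1.1, h1.2, h2.1, h2.2]
      calc ρ (t+1) * (1 - stoppingCDF p t) * p (t+1)
          = ρ (t+1) * ((1 - stoppingCDF p t) * p (t+1)) := by ring
        _ ≤ ρ (t+1) * 1 := mul_le_mul_of_nonneg_left this (hρ0 _)
        _ = ρ (t+1) := mul_one _
  have hbS : Summable b := by
    apply Summable.of_nonneg_of_le _ _ hρshift
    · intro t
      exact mul_nonneg (mul_nonneg (hρ0 _) (hpow t).1) hl0.le
    · intro t
      have : (1 - c / Ibar) ^ t * (c / Ibar) ≤ 1 := by
        nlinarith [(hpow t).1, (hpow t).2]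
      calc ρ (t+1) * (1 - c / Ibar) ^ t * (c / Ibar)
          = ρ (t+1) * ((1 - c / Ibar) ^ t * (c / Ibar)) := by ring
        _ ≤ ρ (t+1) * 1 := mul_le_mul_of_nonneg_left this (hρ0 _)
        _ = ρ (t+1) := mul_one _
  have hfin : ∀ T, ∑ t ∈ range T, a t ≤ (∑ t ∈ range T, b t) + ρ T := by
    intro T
    have := hD T
    have heq : ∑ t ∈ range T, (a t - b t) = ∑ t ∈ range T, ρ (t+1) * (H t - H (t+1)) :=
      Finset.sum_congr rfl fun t _ => hab t
    rw [Finset.sum_sub_distrib] at heq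
    linarith
  have hba : (∑' t, a t) ≤ ∑' t, b t := by
    have h1 := haS.hasSum.tendsto_sum_nat
    have h2 := hbS.hasSum.tendsto_sum_nat
    have h3 : Filter.Tendsto (fun T => (∑ t ∈ range T, b t) + ρ T)
        Filter.atTop (nhds (∑' t, b t)) := by
      have := h2.add hρsum.tendsto_atTop_zero
      simpa using this
    exact le_of_tendsto_of_tendsto' h1 h3 hfin
  calc (∑' t : ℕ, ρ (t + 1) * (1 - stoppingCDF p t) * p (t + 1) * Vstar)
      = (∑' t, a t) * Vstar := tsum_mul_right
    _ ≤ (∑' t, b t) * Vstar := mul_le_mul_of_nonneg_right hba hV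
    _ = ∑' t : ℕ, ρ (t + 1) * (1 - c / Ibar) ^ t * (c / Ibar) * Vstar := tsum_mul_right.symm


/-- For any nonnegative, nonincreasing, convex, summable discount sequence `ρ`,
every discrete feasible strategy has value at most
`∑_{t=1}^∞ ρ_t (1 − c/Ī)^{t−1} (c/Ī) V*`, and the constant strategy
`p ≡ c/Ī`, `I ≡ 0` is feasible and attains this bound. -/
theorem value_le_constant_strategy_value
    (c Ibar Vstar : ℝ) (hc : 0 < c) (hcI : c < Ibar) (hV : 0 ≤ Vstar)
    (ρ : ℕ → ℝ) (hρ0 : ∀ t, 0 ≤ ρ t) (hρdec : ∀ t, ρ (t + 1) ≤ ρ t)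
    (hρconv : ∀ t, ρ (t + 1) - ρ t ≤ ρ (t + 2) - ρ (t + 1)) (hρsum : Summable ρ) :
    (∀ p I : ℕ → ℝ, DiscreteFeasible c Ibar p I →
      discreteValue ρ p Vstar ≤
        ∑' t : ℕ, ρ (t + 1) * (1 - c / Ibar) ^ t * (c / Ibar) * Vstar) ∧
    DiscreteFeasible c Ibar (fun _ => c / Ibar) (fun _ => 0) ∧
    discreteValue ρ (fun _ => c / Ibar) Vstar =
      ∑' t : ℕ, ρ (t + 1) * (1 - c / Ibar) ^ t * (c / Ibar) * Vstar := by
  have hIbar : 0 < Ibar := hc.trans hcI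
  have hl0 : 0 < c / Ibar := div_pos hc hIbar
  have hl1 : c / Ibar < 1 := (div_lt_one hIbar).mpr hcI
  have hconstCDF : ∀ t, 1 - stoppingCDF (fun _ => c / Ibar) t = (1 - c / Ibar) ^ t := by
    intro t
    induction t with
    | zero => simp [stoppingCDF]
    | succ n ih => rw [ValueAux.survival_succ, ih, pow_succ]
  refine ⟨fun p I hfeas => main_value_ineq c Ibar Vstar hc hcI hV ρ hρ0 hρdec hρconv hρsum p I hfeas, ?_, ?_⟩
  · refine ⟨fun t _ => ⟨hl0.le, hl1.le⟩, fun t _ => le_refl 0, rfl, fun t _ => ?_⟩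
    rw [sub_zero, sub_zero, zero_mul, add_zero, mul_div_cancel₀ c hIbar.ne']
  · unfold discreteValue
    exact tsum_congr fun t => by rw [hconstCDF t]
end

section
/- Fix a natural number T ≥ 2 and an integer t with 1 ≤ t ≤ T, and a real I ≥ 0. Consider all pairs of sequences (p_τ)_{τ≥t} with p_τ ∈ [0,1] and (I_τ)_{τ≥t} with I_τ ≥ 0, I_t = I, satisfying (Ī − I_τ)·p_τ + (I_{τ+1} − I_τ)·(1 − p_τ) ≤ c for every τ ≥ t, and define Q_{t−1} = 0, Q_τ = Q_{τ−1} + (1 − Q_{τ−1})·p_τ. Then the supremum over all such pairs of ∑_{τ=t}^{T} ((T−τ)/T)·(1 − Q_{τ−1})·p_τ·V* equals: ((T−t)/T)·V* if c + I ≥ Ī; and ((T−t)/T)·((c+I)/Ī)·V* + (1 − (c+I)/Ī)·∑_{τ=t+1}^{T} ((T−τ)/T)·(c/Ī)·(1 − c/Ī)^{τ−t−1}·V* if c + I < Ī. -/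
private lemma fhv_Icc_insert (a b : ℕ) (h : a ≤ b) :
    Finset.Icc a b = insert a (Finset.Icc (a+1) b) := by
  ext x; simp only [Finset.mem_Icc, Finset.mem_insert]; omega

private noncomputable def fhvG (T : ℕ) (r : ℝ) (τ : ℕ) : ℝ :=
  ∑ s ∈ Finset.Icc (τ+1) T, ((T:ℝ)-s)/T * r * (1-r)^(s-τ-1)

private lemma fhvG_def (T : ℕ) (r : ℝ) (τ : ℕ) :
    fhvG T r τ = ∑ s ∈ Finset.Icc (τ+1) T, ((T:ℝ)-s)/T * r * (1-r)^(s-τ-1) := rfl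

private lemma fhvG_succ (T : ℕ) (r : ℝ) (τ : ℕ) (h : τ < T) :
    fhvG T r τ = ((T:ℝ)-(τ+1:ℕ))/T * r + (1-r) * fhvG T r (τ+1) := by
  rw [fhvG_def, fhvG_def, fhv_Icc_insert (τ+1) T h, Finset.sum_insert (by simp),
    Finset.mul_sum]
  have h0 : (τ+1) - τ - 1 = 0 := by omega
  rw [h0, pow_zero, mul_one]
  congr 1
  apply Finset.sum_congr rfl
  intro s hs
  have hs2 : τ + 2 ≤ s := (Finset.mem_Icc.1 hs).1
  have : s - τ - 1 = (s - (τ+1) - 1) + 1 := by omega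
  rw [this, pow_succ]
  ring

private lemma fhvG_top (T : ℕ) (r : ℝ) : fhvG T r T = 0 := by
  rw [fhvG_def]
  have : Finset.Icc (T+1) T = ∅ := by rw [Finset.Icc_eq_empty]; omega
  simp [this]

private lemma fhvG_gamma (T : ℕ) (hT : 0 < T) (r : ℝ) (hr0 : 0 < r) :
    ∀ d σ, σ + d = T →
    ((T:ℝ)-σ)/T - fhvG T r σ = (1 - (1-r)^d)/(r*T) := by
  intro d
  induction d with
  | zero =>
    intro σ hσ
    have hσ' : σ = T := by omega
    subst hσ'
    rw [fhvG_top]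
    simp
  | succ d ih =>
    intro σ hσ
    have hσT : σ < T := by omega
    have ihs := ih (σ+1) (by omega)
    rw [fhvG_succ T r σ hσT]
    have hG : fhvG T r (σ+1) = ((T:ℝ)-(σ+1:ℕ))/T - (1 - (1-r)^d)/(r*T) := by linarith
    rw [hG]
    have hTne : (T:ℝ) ≠ 0 := by positivity
    have hrne : r ≠ 0 := ne_of_gt hr0
    push_cast
    field_simp
    ring

private lemma fhv_bellman_core (r p x x' ρ' g Tinv : ℝ)
    (hp1 : p ≤ 1) (hx'r : r ≤ x')
    (hγ : g ≤ ρ') (hrγ : r * (ρ' - g) ≤ Tinv)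
    (hA : p + (1-p)*(x'-r) ≤ x) :
    (ρ'+Tinv)*p + (1-p)*(ρ'*x' + (1-x')*g) ≤ (ρ'+Tinv)*x + (1-x)*(ρ'*r + (1-r)*g) := by
  nlinarith [mul_nonneg (mul_nonneg (sub_nonneg.2 hp1) (sub_nonneg.2 hx'r)) (sub_nonneg.2 hrγ),
    mul_nonneg (sub_nonneg.2 hA)
      (by nlinarith : (0:ℝ) ≤ Tinv + (1-r)*(ρ'-g))]

private noncomputable def fhvW (T : ℕ) (c Ibar Vstar : ℝ) (τ : ℕ) (J : ℝ) : ℝ :=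
  (((T:ℝ)-τ)/T * min 1 ((c+J)/Ibar)
    + (1 - min 1 ((c+J)/Ibar)) * fhvG T (c/Ibar) τ) * Vstar

private lemma fhvW_def (T : ℕ) (c Ibar Vstar : ℝ) (τ : ℕ) (J : ℝ) :
    fhvW T c Ibar Vstar τ J
    = (((T:ℝ)-τ)/T * min 1 ((c+J)/Ibar)
      + (1 - min 1 ((c+J)/Ibar)) * fhvG T (c/Ibar) τ) * Vstar := rfl

private lemma fhvW_top (T : ℕ) (c Ibar Vstar : ℝ) (J : ℝ) :
    fhvW T c Ibar Vstar T J = 0 := by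
  rw [fhvW_def, fhvG_top]
  simp

private lemma fhv_bellman (c Ibar Vstar : ℝ) (hc : 0 < c) (hcI : c < Ibar) (hV : 0 ≤ Vstar)
    (T : ℕ) (hTpos : 0 < T) (τ : ℕ) (hτT : τ < T) (p J J' : ℝ)
    (hp0 : 0 ≤ p) (hp1 : p ≤ 1) (hJ : 0 ≤ J) (hJ' : 0 ≤ J')
    (hcon : (Ibar - J) * p + (J' - J) * (1 - p) ≤ c) :
    ((T:ℝ)-τ)/T * p * Vstar + (1-p) * fhvW T c Ibar Vstar (τ+1) J'
      ≤ fhvW T c Ibar Vstar τ J := by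
  have hIbar : (0:ℝ) < Ibar := lt_trans hc hcI
  have hT0 : (0:ℝ) < (T:ℝ) := by exact_mod_cast hTpos
  have hTne : (T:ℝ) ≠ 0 := ne_of_gt hT0
  set r : ℝ := c / Ibar with hr_def
  have hr0 : 0 < r := div_pos hc hIbar
  have hr1 : r < 1 := (div_lt_one hIbar).2 hcI
  have hq0 : (0:ℝ) ≤ 1 - r := by linarith
  rw [fhvW_def, fhvW_def]
  set x : ℝ := min 1 ((c+J)/Ibar) with hx_def
  set x' : ℝ := min 1 ((c+J')/Ibar) with hx'_def
  set g : ℝ := fhvG T r (τ+1) with hg_def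
  set ρ' : ℝ := ((T:ℝ)-(τ+1:ℕ))/T with hρ'_def
  have hrec : fhvG T r τ = ρ' * r + (1-r) * g := fhvG_succ T r τ hτT
  have hgam : ρ' - g = (1 - (1-r)^(T-(τ+1)))/(r*T) :=
    fhvG_gamma T hTpos r hr0 (T-(τ+1)) (τ+1) (by omega)
  have hqd1 : (1-r)^(T-(τ+1)) ≤ 1 := pow_le_one₀ hq0 (by linarith)
  have hqd0 : (0:ℝ) ≤ (1-r)^(T-(τ+1)) := pow_nonneg hq0 _
  have hγ : g ≤ ρ' := by
    have : (0:ℝ) ≤ (1 - (1-r)^(T-(τ+1)))/(r*T) :=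
      div_nonneg (by linarith) (by positivity)
    linarith [hgam]
  have hrγ : r * (ρ' - g) ≤ 1/(T:ℝ) := by
    rw [hgam, show r * ((1 - (1-r)^(T-(τ+1)))/(r*T)) = (1 - (1-r)^(T-(τ+1)))/(T:ℝ) by
      field_simp; try ring]
    exact (div_le_div_iff_of_pos_right hT0).2 (by linarith)
  have hx1 : x ≤ 1 := min_le_left _ _
  have hx'1 : x' ≤ 1 := min_le_left _ _
  have hx'r : r ≤ x' := le_min (le_of_lt hr1)
    ((div_le_div_iff_of_pos_right hIbar).2 (by linarith))
  have hx'a : x' ≤ (c+J')/Ibar := min_le_right _ _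
  have hcon' : p + (1-p) * ((c+J')/Ibar - r) ≤ (c+J)/Ibar := by
    have h1 : (p + (1-p) * ((c+J')/Ibar - r)) = (p*Ibar + (1-p)*J')/Ibar := by
      rw [hr_def]; field_simp; try ring
    rw [h1]
    apply (div_le_div_iff_of_pos_right hIbar).2
    nlinarith [hcon]
  have hA : p + (1-p)*(x'-r) ≤ x := by
    rcases le_or_gt 1 ((c+J)/Ibar) with h | h
    · rw [hx_def, min_eq_left h]
      nlinarith [mul_nonneg (sub_nonneg.2 hp1) (sub_nonneg.2 (show x' - r ≤ 1 by linarith))]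
    · rw [hx_def, min_eq_right (le_of_lt h)]
      nlinarith [mul_le_mul_of_nonneg_left (sub_le_sub_right hx'a r) (sub_nonneg.2 hp1)]
  have hρ : ((T:ℝ)-(τ:ℕ))/T = ρ' + 1/(T:ℝ) := by
    rw [hρ'_def]; push_cast; ring
  have core := fhv_bellman_core r p x x' ρ' g (1/(T:ℝ)) hp1 hx'r hγ hrγ hA
  have core' := mul_le_mul_of_nonneg_right core hV
  rw [hrec, hρ]
  refine le_trans (le_of_eq (by ring)) (le_trans core' (le_of_eq (by ring)))

/-- Value function of the finite-horizon relaxed information-acquisition problem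
under the truncated linear discount `ρ_τ = (T − τ)/T`: the supremum over
feasible continuations from period `t` with accumulated information `I` is
`((T−t)/T)·V*` when `c + I ≥ Ī`, and
`((T−t)/T)·((c+I)/Ī)·V* + (1 − (c+I)/Ī)·∑_{τ=t+1}^{T} ((T−τ)/T)(c/Ī)(1 − c/Ī)^{τ−t−1} V*`
when `c + I < Ī`. -/
theorem finite_horizon_value
    (c Ibar Vstar : ℝ) (hc : 0 < c) (hcI : c < Ibar) (hV : 0 ≤ Vstar)
    (T t : ℕ) (hT : 2 ≤ T) (ht1 : 1 ≤ t) (htT : t ≤ T) (I : ℝ) (hI : 0 ≤ I) :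
    sSup { v : ℝ |
      ∃ p Iseq Q : ℕ → ℝ,
        (∀ τ, t ≤ τ → p τ ∈ Set.Icc (0:ℝ) 1) ∧
        (∀ τ, t ≤ τ → 0 ≤ Iseq τ) ∧
        Iseq t = I ∧
        (∀ τ, t ≤ τ → (Ibar - Iseq τ) * p τ + (Iseq (τ + 1) - Iseq τ) * (1 - p τ) ≤ c) ∧
        Q (t - 1) = 0 ∧
        (∀ τ, t ≤ τ → Q τ = Q (τ - 1) + (1 - Q (τ - 1)) * p τ) ∧
        v = ∑ τ ∈ Finset.Icc t T,
              ((T : ℝ) - (τ : ℝ)) / (T : ℝ) * (1 - Q (τ - 1)) * p τ * Vstar } =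
    (if Ibar ≤ c + I then ((T : ℝ) - (t : ℝ)) / (T : ℝ) * Vstar
     else ((T : ℝ) - (t : ℝ)) / (T : ℝ) * ((c + I) / Ibar) * Vstar +
       (1 - (c + I) / Ibar) *
         ∑ τ ∈ Finset.Icc (t + 1) T,
           ((T : ℝ) - (τ : ℝ)) / (T : ℝ) * (c / Ibar) * (1 - c / Ibar) ^ (τ - t - 1) * Vstar) := by
  have hIbar : (0:ℝ) < Ibar := lt_trans hc hcI
  have hT0 : (0:ℝ) < (T:ℝ) := by exact_mod_cast (by omega : 0 < T)
  have hr0 : (0:ℝ) < c / Ibar := div_pos hc hIbar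
  have hr1 : c / Ibar < 1 := (div_lt_one hIbar).2 hcI
  -- the RHS equals fhvW at (t, I)
  have hRHS : (if Ibar ≤ c + I then ((T : ℝ) - (t : ℝ)) / (T : ℝ) * Vstar
     else ((T : ℝ) - (t : ℝ)) / (T : ℝ) * ((c + I) / Ibar) * Vstar +
       (1 - (c + I) / Ibar) *
         ∑ τ ∈ Finset.Icc (t + 1) T,
           ((T : ℝ) - (τ : ℝ)) / (T : ℝ) * (c / Ibar) * (1 - c / Ibar) ^ (τ - t - 1) * Vstar)
      = fhvW T c Ibar Vstar t I := by
    rcases le_or_gt Ibar (c + I) with h | h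
    · rw [if_pos h, fhvW_def, min_eq_left ((one_le_div hIbar).2 h)]
      ring
    · rw [if_neg (not_le.2 h), fhvW_def,
        min_eq_right (le_of_lt ((div_lt_one hIbar).2 h)), fhvG_def,
        ← Finset.sum_mul]
      ring
  rw [hRHS]
  set S : Set ℝ := { v : ℝ |
      ∃ p Iseq Q : ℕ → ℝ,
        (∀ τ, t ≤ τ → p τ ∈ Set.Icc (0:ℝ) 1) ∧
        (∀ τ, t ≤ τ → 0 ≤ Iseq τ) ∧
        Iseq t = I ∧
        (∀ τ, t ≤ τ → (Ibar - Iseq τ) * p τ + (Iseq (τ + 1) - Iseq τ) * (1 - p τ) ≤ c) ∧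
        Q (t - 1) = 0 ∧
        (∀ τ, t ≤ τ → Q τ = Q (τ - 1) + (1 - Q (τ - 1)) * p τ) ∧
        v = ∑ τ ∈ Finset.Icc t T,
              ((T : ℝ) - (τ : ℝ)) / (T : ℝ) * (1 - Q (τ - 1)) * p τ * Vstar } with hS_def
  -- membership: the optimal policy attains fhvW t I
  have hmem : fhvW T c Ibar Vstar t I ∈ S := by
    rw [hS_def]
    set x : ℝ := min 1 ((c+I)/Ibar) with hx_def
    have hx0 : 0 ≤ x := le_min zero_le_one (by positivity)
    have hx1 : x ≤ 1 := min_le_left _ _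
    refine ⟨fun τ => if τ = t then x else c/Ibar, fun τ => if τ = t then I else 0,
      fun τ => if τ < t then 0 else 1 - (1 - x) * (1-c/Ibar)^(τ-t),
      ?_, ?_, ?_, ?_, ?_, ?_, ?_⟩
    · intro τ _
      beta_reduce
      by_cases hτ : τ = t <;>
        simp [hτ, Set.mem_Icc, hx0, hx1, le_of_lt hr0, le_of_lt hr1]
    · intro τ _
      beta_reduce
      by_cases hτ : τ = t <;> simp [hτ, hI]
    · simp
    · intro τ hτ
      beta_reduce
      by_cases hτt : τ = t
      · rw [if_pos hτt, if_pos hτt, if_neg (by omega : ¬ τ + 1 = t)]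
        rcases le_or_gt 1 ((c+I)/Ibar) with h1 | h1
        · rw [hx_def, min_eq_left h1]
          have : Ibar ≤ c + I := (one_le_div hIbar).1 h1
          nlinarith
        · rw [hx_def, min_eq_right (le_of_lt h1)]
          have : Ibar * ((c+I)/Ibar) = c + I := by field_simp
          nlinarith
      · rw [if_neg hτt, if_neg (by omega : ¬ τ + 1 = t), if_neg hτt]
        have : Ibar * (c/Ibar) = c := by field_simp
        nlinarith
    · beta_reduce
      rw [if_pos (by omega : t - 1 < t)]
    · intro τ hτ
      beta_reduce
      by_cases hτt : τ = t
      · rw [if_neg (by omega : ¬ τ < t), if_pos (by omega : τ - 1 < t), if_pos hτt]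
        rw [show τ - t = 0 by omega, pow_zero]
        ring
      · rw [if_neg (by omega : ¬ τ < t), if_neg (by omega : ¬ τ - 1 < t), if_neg hτt]
        have hpow : τ - t = (τ - 1 - t) + 1 := by omega
        rw [hpow, pow_succ]
        ring
    · -- value computation
      beta_reduce
      rw [fhv_Icc_insert t T htT, Finset.sum_insert (by simp),
        if_pos (by omega : t - 1 < t), if_pos rfl]
      have htail : ∑ τ ∈ Finset.Icc (t+1) T,
          ((T : ℝ) - (τ : ℝ)) / (T : ℝ) *
            (1 - (if τ - 1 < t then (0:ℝ) else 1 - (1 - x) * (1-c/Ibar)^(τ-1-t))) *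
            (if τ = t then x else c/Ibar) * Vstar
          = (1 - x) * (fhvG T (c/Ibar) t * Vstar) := by
        rw [fhvG_def, Finset.sum_mul, Finset.mul_sum]
        apply Finset.sum_congr rfl
        intro s hs
        have hs1 : t + 1 ≤ s := (Finset.mem_Icc.1 hs).1
        rw [if_neg (by omega : ¬ s - 1 < t), if_neg (by omega : ¬ s = t)]
        have : s - 1 - t = s - t - 1 := by omega
        rw [this]
        ring
      rw [htail, fhvW_def, ← hx_def]
      ring
  -- upper bound
  have hub : ∀ v ∈ S, v ≤ fhvW T c Ibar Vstar t I := by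
    rw [hS_def]
    rintro v ⟨p, Iseq, Q, hp, hIseq, hIt, hcon, hQ0, hQrec, rfl⟩
    have hQle : ∀ τ, t - 1 ≤ τ → Q τ ≤ 1 := by
      refine Nat.le_induction (by rw [hQ0]; norm_num) ?_
      intro n hn hQn
      have hnt : t ≤ n + 1 := by omega
      rw [hQrec (n+1) hnt, Nat.add_sub_cancel]
      have hp1 := (hp (n+1) hnt).2
      have hp0 := (hp (n+1) hnt).1
      nlinarith [mul_nonneg (sub_nonneg.2 hQn) (sub_nonneg.2 hp1)]
    have key : ∀ d τ, t ≤ τ → τ + d = T →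
        ∑ s ∈ Finset.Icc τ T, ((T : ℝ) - (s : ℝ)) / (T : ℝ) * (1 - Q (s - 1)) * p s * Vstar
          ≤ (1 - Q (τ - 1)) * fhvW T c Ibar Vstar τ (Iseq τ) := by
      intro d
      induction d with
      | zero =>
        intro τ h1 h2
        have hτ : τ = T := by omega
        subst hτ
        rw [Finset.Icc_self, Finset.sum_singleton, fhvW_top, sub_self, zero_div]
        simp
      | succ d ih =>
        intro τ h1 h2
        have hτT : τ < T := by omega
        have ihτ := ih (τ+1) (by omega) (by omega)
        rw [Nat.add_sub_cancel] at ihτ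
        rw [fhv_Icc_insert τ T (by omega), Finset.sum_insert (by simp)]
        have hfac : 0 ≤ 1 - Q (τ - 1) := by
          have := hQle (τ-1) (by omega)
          linarith
        have hQτ : 1 - Q τ = (1 - Q (τ-1)) * (1 - p τ) := by
          rw [hQrec τ h1]; ring
        have hbellτ := fhv_bellman c Ibar Vstar hc hcI hV T (by omega) τ hτT
          (p τ) (Iseq τ) (Iseq (τ+1))
          (hp τ h1).1 (hp τ h1).2 (hIseq τ h1) (hIseq (τ+1) (by omega)) (hcon τ h1)
        calc ((T : ℝ) - (τ : ℝ)) / (T : ℝ) * (1 - Q (τ - 1)) * p τ * Vstar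
              + ∑ s ∈ Finset.Icc (τ+1) T,
                ((T : ℝ) - (s : ℝ)) / (T : ℝ) * (1 - Q (s - 1)) * p s * Vstar
            ≤ ((T : ℝ) - (τ : ℝ)) / (T : ℝ) * (1 - Q (τ - 1)) * p τ * Vstar
              + (1 - Q τ) * fhvW T c Ibar Vstar (τ+1) (Iseq (τ+1)) := by linarith
          _ = (1 - Q (τ-1)) * (((T:ℝ)-(τ:ℕ))/T * p τ * Vstar
              + (1 - p τ) * fhvW T c Ibar Vstar (τ+1) (Iseq (τ+1))) := by
                rw [hQτ]; ring
          _ ≤ (1 - Q (τ-1)) * fhvW T c Ibar Vstar τ (Iseq τ) :=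
              mul_le_mul_of_nonneg_left hbellτ hfac
    have hkey := key (T - t) t le_rfl (by omega)
    rw [hQ0, hIt] at hkey
    linarith
  exact le_antisymm (csSup_le ⟨_, hmem⟩ hub) (le_csSup ⟨_, hub⟩ hmem)
end

section
/- For every discrete feasible strategy (p, I) with stopping CDF (P_t) and every n ≥ 1, it holds that c · ∑_{t=1}^{n} (1 − P_{t−1}) ≥ Ī · P_n. Consequently, if P_n → 1 as n → ∞ (the strategy stops almost surely), then the expected stopping time ∑_{t=1}^{∞} (1 − P_{t−1}) is at least Ī/c. -/
/-- For every discrete feasible strategy, `c · ∑_{t=1}^{n} (1 − P_{t−1}) ≥ Ī · P_n`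
for all `n ≥ 1`; hence if the strategy stops almost surely (`P_n → 1`), the
expected stopping time `∑_{t=1}^{∞} (1 − P_{t−1})` is at least `Ī/c`. -/
theorem expected_stopping_time_lower_bound
    (c Ibar : ℝ) (hc : 0 < c) (hcI : c < Ibar)
    (p I : ℕ → ℝ) (hfeas : DiscreteFeasible c Ibar p I) :
    (∀ n : ℕ, 1 ≤ n →
      Ibar * stoppingCDF p n ≤ c * ∑ t ∈ Finset.range n, (1 - stoppingCDF p t)) ∧
    (Filter.Tendsto (stoppingCDF p) Filter.atTop (nhds 1) →
      ENNReal.ofReal (Ibar / c) ≤ ∑' t : ℕ, ENNReal.ofReal (1 - stoppingCDF p t)) := by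
  obtain ⟨hp, hI, hI1, hfe⟩ := hfeas
  have hP : ∀ t, stoppingCDF p t ∈ Set.Icc (0:ℝ) 1 := by
    intro t
    induction t with
    | zero => simp [stoppingCDF]
    | succ t ih =>
      obtain ⟨h0, h1⟩ := ih
      obtain ⟨hp0, hp1⟩ := hp (t+1) (by omega)
      constructor
      · have : 0 ≤ (1 - stoppingCDF p t) * p (t+1) := mul_nonneg (by linarith) hp0
        simp only [stoppingCDF]; linarith
      · have : (1 - stoppingCDF p t) * p (t+1) ≤ 1 - stoppingCDF p t :=
          mul_le_of_le_one_right (by linarith) hp1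
        simp only [stoppingCDF]; linarith
  have key : ∀ n, Ibar * stoppingCDF p n + (1 - stoppingCDF p n) * I (n+1)
      ≤ c * ∑ t ∈ Finset.range n, (1 - stoppingCDF p t) := by
    intro n
    induction n with
    | zero => simp [stoppingCDF, hI1]
    | succ n ih =>
      have hfen := hfe (n+1) (by omega)
      have hQ : 0 ≤ 1 - stoppingCDF p n := by have := (hP n).2; linarith
      have hmul := mul_le_mul_of_nonneg_left hfen hQ
      rw [Finset.sum_range_succ]
      simp only [stoppingCDF]
      nlinarith [hmul, ih]
  have bound : ∀ n, Ibar * stoppingCDF p n ≤ c * ∑ t ∈ Finset.range n, (1 - stoppingCDF p t) := by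
    intro n
    have h := key n
    have hInn : 0 ≤ I (n+1) := hI (n+1) (by omega)
    have hQ : 0 ≤ 1 - stoppingCDF p n := by have := (hP n).2; linarith
    nlinarith [mul_nonneg hQ hInn]
  refine ⟨fun n _ => bound n, fun htend => ?_⟩
  have hratio : ∀ n, ENNReal.ofReal (Ibar * stoppingCDF p n / c)
      ≤ ∑' t : ℕ, ENNReal.ofReal (1 - stoppingCDF p t) := by
    intro n
    have h1 : Ibar * stoppingCDF p n / c ≤ ∑ t ∈ Finset.range n, (1 - stoppingCDF p t) := by
      rw [div_le_iff₀ hc]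
      have := bound n
      linarith [this]
    calc ENNReal.ofReal (Ibar * stoppingCDF p n / c)
        ≤ ENNReal.ofReal (∑ t ∈ Finset.range n, (1 - stoppingCDF p t)) :=
          ENNReal.ofReal_le_ofReal h1
      _ = ∑ t ∈ Finset.range n, ENNReal.ofReal (1 - stoppingCDF p t) :=
          ENNReal.ofReal_sum_of_nonneg (fun t _ => by have := (hP t).2; linarith)
      _ ≤ ∑' t : ℕ, ENNReal.ofReal (1 - stoppingCDF p t) := ENNReal.sum_le_tsum _
  have htend2 : Filter.Tendsto (fun n => ENNReal.ofReal (Ibar * stoppingCDF p n / c))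
      Filter.atTop (nhds (ENNReal.ofReal (Ibar / c))) := by
    have h0 : Filter.Tendsto (fun n => Ibar * stoppingCDF p n / c) Filter.atTop
        (nhds (Ibar / c)) := by
      have := (htend.const_mul Ibar).div_const c
      simpa using this
    exact (ENNReal.continuous_ofReal.tendsto _).comp h0
  exact le_of_tendsto htend2 (Filter.Eventually.of_forall hratio)
end

section
/- For every discrete feasible strategy (p, I) with stopping CDF (P_t) and every n ≥ 0, it holds that ∑_{t=0}^{n} P_t ≤ ∑_{t=0}^{n} (1 − (1 − c/Ī)^t). In particular, when the strategy is exhaustive (its expected stopping time ∑_{t=1}^∞ (1 − P_{t−1}) equals Ī/c), its stopping time distribution second-order stochastically dominates the geometric distribution with parameter c/Ī, i.e., the geometric distribution is a mean-preserving spread of it. -/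
/-!
Write `S t = 1 - P t` for the survival probabilities. Multiplying the constraint at time `t` by
`S (t-1)` and telescoping (with `I 1 = 0` and `I ≥ 0`) gives the budget inequality
`Ī · P n ≤ c · ∑_{t<n} S t`. Hence the partial sums `A n = ∑_{t<n} S t` satisfy
`A (n+1) ≥ 1 + (1 - c/Ī) · A n`, which the geometric partial sums satisfy with equality,
so `A n` dominates them; this is the claimed inequality for the partial sums of `P`.
-/

open Finset

theorem geom_sum_le_of_forall_mul_add_one_le {R : Type*} [Semiring R] [PartialOrder R]
    [IsOrderedRing R] {q : R} (hq : 0 ≤ q) {a : ℕ → R} (h0 : 0 ≤ a 0)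
    (hstep : ∀ n, q * a n + 1 ≤ a (n + 1)) (n : ℕ) :
    ∑ i ∈ range n, q ^ i ≤ a n := by
  induction n with
  | zero => simpa using h0
  | succ n ih =>
    rw [geom_sum_succ]
    exact (add_le_add_left (mul_le_mul_of_nonneg_left ih hq) 1).trans (hstep n)

section stoppingCDF

variable {c Ibar : ℝ} {p I : ℕ → ℝ}

theorem one_sub_stoppingCDF_succ (p : ℕ → ℝ) (t : ℕ) :
    1 - stoppingCDF p (t + 1) = (1 - stoppingCDF p t) * (1 - p (t + 1)) := by
  rw [stoppingCDF]
  ring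

theorem one_sub_stoppingCDF_nonneg (hp : ∀ t, 1 ≤ t → p t ≤ 1) (t : ℕ) :
    0 ≤ 1 - stoppingCDF p t := by
  induction t with
  | zero => simp [stoppingCDF]
  | succ t ih =>
    rw [one_sub_stoppingCDF_succ]
    exact mul_nonneg ih (sub_nonneg.2 (hp (t + 1) t.succ_pos))

theorem DiscreteFeasible.mul_stoppingCDF_add_mul_one_sub_le (h : DiscreteFeasible c Ibar p I)
    (n : ℕ) :
    Ibar * stoppingCDF p n + I (n + 1) * (1 - stoppingCDF p n) ≤
      c * ∑ t ∈ range n, (1 - stoppingCDF p t) := by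
  obtain ⟨hp, -, hI1, hcon⟩ := h
  induction n with
  | zero => simp [stoppingCDF, hI1]
  | succ n ih =>
    have hstep := mul_le_mul_of_nonneg_left (hcon (n + 1) n.succ_pos)
      (one_sub_stoppingCDF_nonneg (fun t ht => (hp t ht).2) n)
    rw [sum_range_succ, stoppingCDF]
    linear_combination ih + hstep

theorem DiscreteFeasible.mul_stoppingCDF_le (h : DiscreteFeasible c Ibar p I) (n : ℕ) :
    Ibar * stoppingCDF p n ≤ c * ∑ t ∈ range n, (1 - stoppingCDF p t) := by
  have hI := mul_nonneg (h.2.1 (n + 1) n.succ_pos)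
    (one_sub_stoppingCDF_nonneg (fun t ht => (h.1 t ht).2) n)
  linarith [h.mul_stoppingCDF_add_mul_one_sub_le n]

theorem DiscreteFeasible.geom_sum_le_sum_one_sub_stoppingCDF (h : DiscreteFeasible c Ibar p I)
    (hIbar : 0 < Ibar) (hcI : c ≤ Ibar) (n : ℕ) :
    ∑ t ∈ range n, (1 - c / Ibar) ^ t ≤ ∑ t ∈ range n, (1 - stoppingCDF p t) := by
  have hq : 0 ≤ 1 - c / Ibar := by rwa [sub_nonneg, div_le_one hIbar]
  refine geom_sum_le_of_forall_mul_add_one_le hq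
    (a := fun k => ∑ t ∈ range k, (1 - stoppingCDF p t)) (by simp) (fun n => ?_) n
  have hP : stoppingCDF p n ≤ c / Ibar * ∑ t ∈ range n, (1 - stoppingCDF p t) := by
    rw [div_mul_eq_mul_div, le_div_iff₀ hIbar, mul_comm]
    exact h.mul_stoppingCDF_le n
  rw [sum_range_succ]
  linarith

theorem DiscreteFeasible.sum_stoppingCDF_le_geometric (h : DiscreteFeasible c Ibar p I)
    (hIbar : 0 < Ibar) (hcI : c ≤ Ibar) (n : ℕ) :
    ∑ t ∈ range n, stoppingCDF p t ≤ ∑ t ∈ range n, (1 - (1 - c / Ibar) ^ t) := by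
  have := h.geom_sum_le_sum_one_sub_stoppingCDF hIbar hcI n
  simp only [sum_sub_distrib] at this ⊢
  linarith

end stoppingCDF

/-- For every discrete feasible strategy, the partial sums of its stopping CDF are
dominated by those of the geometric CDF `1 − (1 − c/Ī)^t`; in particular an
exhaustive strategy (expected stopping time `= Ī/c`) has the same mean as the
geometric distribution with parameter `c/Ī`, so the geometric distribution is a
mean-preserving spread of its stopping time distribution (second-order stochastic
dominance). -/
theorem stoppingCDF_partial_sums_le_geometric
    (c Ibar : ℝ) (hc : 0 < c) (hcI : c < Ibar)
    (p I : ℕ → ℝ) (hfeas : DiscreteFeasible c Ibar p I) :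
    (∀ n : ℕ, ∑ t ∈ Finset.range (n + 1), stoppingCDF p t ≤
      ∑ t ∈ Finset.range (n + 1), (1 - (1 - c / Ibar) ^ t)) ∧
    ((∑' t : ℕ, (1 - stoppingCDF p t)) = Ibar / c →
      ((∑' t : ℕ, (1 - stoppingCDF p t)) = ∑' t : ℕ, (1 - c / Ibar) ^ t ∧
        ∀ n : ℕ, ∑ t ∈ Finset.range (n + 1), stoppingCDF p t ≤
          ∑ t ∈ Finset.range (n + 1), (1 - (1 - c / Ibar) ^ t))) := by
  have hIbar : 0 < Ibar := hc.trans hcI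
  have hdom n := hfeas.sum_stoppingCDF_le_geometric hIbar hcI.le (n + 1)
  refine ⟨hdom, fun hexh => ⟨?_, hdom⟩⟩
  have hq0 : 0 ≤ 1 - c / Ibar := by rw [sub_nonneg, div_le_one hIbar]; exact hcI.le
  have hq1 : 1 - c / Ibar < 1 := sub_lt_self 1 (div_pos hc hIbar)
  rw [hexh, tsum_geometric_of_lt_one hq0 hq1, sub_sub_cancel, inv_div]
end

section
/- For every continuous feasible strategy (p, I) with stopping CDF P and every T ≥ 0, it holds that c · ∫_0^T (1 − P(t)) dt ≥ Ī · P(T). Consequently, if P(t) → 1 as t → ∞ (the strategy stops almost surely), then the expected stopping time ∫_0^∞ (1 − P(t)) dt is at least Ī/c. -/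
open MeasureTheory

/-- Stopping CDF of a continuous-time strategy with stopping intensity `p`:
`P(t) = 1 − exp(−∫_0^t p(s) ds)`. -/
noncomputable def contCDF (p : ℝ → ℝ) (t : ℝ) : ℝ :=
  1 - Real.exp (-(∫ s in (0:ℝ)..t, p s))

/-- A continuous feasible strategy for the continuous-time relaxed
information-acquisition problem with flow capacity `c` and target information
measure `Ibar`. -/
def ContFeasible (c Ibar : ℝ) (p I : ℝ → ℝ) : Prop :=
  ContinuousOn p (Set.Ici 0) ∧
  IntegrableOn p (Set.Ici 0) ∧
  (∀ t, 0 ≤ t → 0 ≤ p t) ∧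
  I 0 = 0 ∧
  (∀ t, 0 ≤ t → 0 ≤ I t) ∧
  (∀ t, 0 ≤ t → DifferentiableWithinAt ℝ I (Set.Ici 0) t) ∧
  (∀ t, 0 ≤ t → derivWithin I (Set.Ici 0) t ≤ c - p t * (Ibar - I t))

/-!
The survival function `S = 1 - P = exp (-∫₀ᵗ p)` is an integrating factor for the feasibility
constraint: `((I - Ī) S)' = S (I' + p (Ī - I)) ≤ c S`. Integrating over `[0, T]` and using
`I 0 = 0`, `I T ≥ 0` gives `Ī (1 - S T) ≤ c ∫₀ᵀ S`. Letting `T → ∞` gives the bound on the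
expected stopping time.
-/

open Set Filter Topology Real

theorem hasDerivAt_integral_of_continuousOn_Icc {f : ℝ → ℝ} {a b x : ℝ}
    (hf : ContinuousOn f (Icc a b)) (hx : x ∈ Ioo a b) :
    HasDerivAt (fun t => ∫ s in a..t, f s) (f x) x :=
  intervalIntegral.integral_hasDerivAt_right
    ((hf.mono (Icc_subset_Icc_right hx.2.le)).intervalIntegrable_of_Icc hx.1.le)
    ((hf.mono Ioo_subset_Icc_self).stronglyMeasurableAtFilter isOpen_Ioo x hx)
    (hf.continuousAt (Icc_mem_nhds hx.1 hx.2))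

theorem continuousOn_integral_of_continuousOn_Icc {f : ℝ → ℝ} {a b : ℝ} (hab : a ≤ b)
    (hf : ContinuousOn f (Icc a b)) :
    ContinuousOn (fun t => ∫ s in a..t, f s) (Icc a b) := by
  have := intervalIntegral.continuousOn_primitive_interval (μ := volume)
    (uIcc_of_le hab ▸ hf.integrableOn_Icc)
  rwa [uIcc_of_le hab] at this

theorem sub_mul_exp_neg_sub_le_integral_of_deriv_le {a b c Ibar : ℝ} {p A I I' : ℝ → ℝ}
    (hab : a ≤ b) (hA : ContinuousOn A (Icc a b)) (hI : ContinuousOn I (Icc a b))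
    (hA' : ∀ x ∈ Ioo a b, HasDerivAt A (p x) x) (hI' : ∀ x ∈ Ioo a b, HasDerivAt I (I' x) x)
    (hle : ∀ x ∈ Ioo a b, I' x ≤ c - p x * (Ibar - I x)) :
    (I b - Ibar) * exp (-A b) - (I a - Ibar) * exp (-A a) ≤ c * ∫ x in a..b, exp (-A x) := by
  rw [← intervalIntegral.integral_const_mul]
  refine intervalIntegral.sub_le_integral_of_hasDeriv_right_of_le hab
    ((hI.sub continuousOn_const).mul hA.neg.rexp)
    (fun x hx => (((hI' x hx).sub_const Ibar).mul (hA' x hx).neg.exp).hasDerivWithinAt)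
    (continuousOn_const.mul hA.neg.rexp).integrableOn_Icc (fun x hx => ?_)
  simp only [Pi.neg_apply]
  nlinarith [hle x hx, exp_pos (-A x)]

theorem one_sub_contCDF (p : ℝ → ℝ) (t : ℝ) :
    1 - contCDF p t = exp (-∫ s in (0:ℝ)..t, p s) :=
  sub_sub_cancel _ _

theorem continuousOn_one_sub_contCDF {p : ℝ → ℝ} (hp : ContinuousOn p (Ici 0)) {T : ℝ} (hT : 0 ≤ T) :
    ContinuousOn (fun t => 1 - contCDF p t) (Icc 0 T) := by
  simp only [one_sub_contCDF]
  exact (continuousOn_integral_of_continuousOn_Icc hT (hp.mono Icc_subset_Ici_self)).neg.rexp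

theorem ContFeasible.mul_contCDF_le_integral {c Ibar : ℝ} {p I : ℝ → ℝ}
    (hfeas : ContFeasible c Ibar p I) {T : ℝ} (hT : 0 ≤ T) :
    Ibar * contCDF p T ≤ c * ∫ t in (0:ℝ)..T, (1 - contCDF p t) := by
  obtain ⟨hp, -, -, hI0, hI_nonneg, hI_diff, hI_deriv⟩ := hfeas
  have hpT : ContinuousOn p (Icc 0 T) := hp.mono Icc_subset_Ici_self
  have hI_hasDeriv : ∀ x ∈ Ioo 0 T, HasDerivAt I (deriv I x) x := fun x hx =>
    ((hI_diff x hx.1.le).differentiableAt (Ici_mem_nhds hx.1)).hasDerivAt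
  have key := sub_mul_exp_neg_sub_le_integral_of_deriv_le hT
    (continuousOn_integral_of_continuousOn_Icc hT hpT)
    (fun x hx => (hI_diff x hx.1).continuousWithinAt.mono Icc_subset_Ici_self)
    (fun x hx => hasDerivAt_integral_of_continuousOn_Icc hpT hx) hI_hasDeriv
    (fun x hx => by
      rw [← derivWithin_of_mem_nhds (Ici_mem_nhds hx.1)]
      exact hI_deriv x hx.1.le)
  simp only [intervalIntegral.integral_same, hI0, neg_zero, exp_zero] at key
  rw [show contCDF p T = 1 - exp (-∫ s in (0:ℝ)..T, p s) from rfl]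
  simp only [one_sub_contCDF]
  nlinarith [mul_nonneg (hI_nonneg T hT) (exp_pos (-∫ s in (0:ℝ)..T, p s)).le]

theorem ofReal_le_lintegral_Ioi_of_le_integral_of_tendsto {u g : ℝ → ℝ} {L : ℝ}
    (hg : ∀ t ∈ Ioi 0, 0 ≤ g t) (hg_int : ∀ T, 0 ≤ T → IntervalIntegrable g volume 0 T)
    (hu : ∀ T, 0 ≤ T → u T ≤ ∫ t in (0:ℝ)..T, g t) (hlim : Tendsto u atTop (𝓝 L)) :
    ENNReal.ofReal L ≤ ∫⁻ t in Ioi 0, ENNReal.ofReal (g t) := by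
  refine le_of_tendsto ((ENNReal.continuous_ofReal.tendsto L).comp hlim)
    (eventually_atTop.2 ⟨0, fun T hT => ?_⟩)
  calc ENNReal.ofReal (u T)
      ≤ ENNReal.ofReal (∫ t in Ioc 0 T, g t) := by
        rw [← intervalIntegral.integral_of_le hT]
        exact ENNReal.ofReal_le_ofReal (hu T hT)
    _ = ∫⁻ t in Ioc 0 T, ENNReal.ofReal (g t) :=
        ofReal_integral_eq_lintegral_ofReal (hg_int T hT).1
          (ae_restrict_of_forall_mem measurableSet_Ioc fun t ht => hg t ht.1)
    _ ≤ ∫⁻ t in Ioi 0, ENNReal.ofReal (g t) := lintegral_mono_set Ioc_subset_Ioi_self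

theorem cont_expected_stopping_time_lower_bound_general
    (c Ibar : ℝ) (hc : 0 < c)
    (p I : ℝ → ℝ) (hfeas : ContFeasible c Ibar p I) :
    (∀ T : ℝ, 0 ≤ T →
      Ibar * contCDF p T ≤ c * ∫ t in (0:ℝ)..T, (1 - contCDF p t)) ∧
    (Filter.Tendsto (contCDF p) Filter.atTop (nhds 1) →
      ENNReal.ofReal (Ibar / c) ≤
        ∫⁻ t in Set.Ioi (0:ℝ), ENNReal.ofReal (1 - contCDF p t)) := by
  refine ⟨fun T hT => hfeas.mul_contCDF_le_integral hT, fun hlim => ?_⟩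
  refine ofReal_le_lintegral_Ioi_of_le_integral_of_tendsto (u := fun T => Ibar / c * contCDF p T)
    (fun t _ => (one_sub_contCDF p t).symm ▸ (exp_pos _).le)
    (fun T hT => (continuousOn_one_sub_contCDF hfeas.1 hT).intervalIntegrable_of_Icc hT)
    (fun T hT => ?_) (by simpa using hlim.const_mul (Ibar / c))
  rw [div_mul_eq_mul_div, div_le_iff₀ hc]
  linarith [hfeas.mul_contCDF_le_integral hT]

/-- For every continuous feasible strategy, `c · ∫_0^T (1 − P(t)) dt ≥ Ī · P(T)`
for all `T ≥ 0`; hence if the strategy stops almost surely (`P(t) → 1`), the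
expected stopping time `∫_0^∞ (1 − P(t)) dt` is at least `Ī/c`. -/
theorem cont_expected_stopping_time_lower_bound
    (c Ibar : ℝ) (hc : 0 < c) (hcI : c < Ibar)
    (p I : ℝ → ℝ) (hfeas : ContFeasible c Ibar p I) :
    (∀ T : ℝ, 0 ≤ T →
      Ibar * contCDF p T ≤ c * ∫ t in (0:ℝ)..T, (1 - contCDF p t)) ∧
    (Filter.Tendsto (contCDF p) Filter.atTop (nhds 1) →
      ENNReal.ofReal (Ibar / c) ≤
        ∫⁻ t in Set.Ioi (0:ℝ), ENNReal.ofReal (1 - contCDF p t)) :=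
  cont_expected_stopping_time_lower_bound_general c Ibar hc p I hfeas
end

section
/- For every continuous feasible strategy (p, I) with stopping CDF P and every T ≥ 0, it holds that ∫_0^T P(t) dt ≤ ∫_0^T (1 − e^{−(c/Ī)t}) dt. In particular, when the strategy is exhaustive (its expected stopping time ∫_0^∞ (1 − P(t)) dt equals Ī/c), its stopping time distribution second-order stochastically dominates the exponential distribution with rate c/Ī, i.e., the exponential distribution is a mean-preserving spread of it. -/
/-!
Write `S = 1 - P = exp (-∫ p)` for the survival function. The feasibility constraint
makes `(Ī - I) S + c ∫₀ᵀ S` nondecreasing (its derivative is `(c - I' - p (Ī - I)) S ≥ 0`),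
and together with `I ≥ 0` this gives `S + (c/Ī) ∫₀ᵀ S ≥ 1`, i.e. `u' + (c/Ī) u ≥ 1` for
`u = ∫₀ᵀ S`. By Grönwall, `u` dominates the solution `∫₀ᵀ e^{-(c/Ī)t} dt` of
`u' + (c/Ī) u = 1`, `u 0 = 0`; subtracting both from `T` gives the claim.
-/

open MeasureTheory

open Set Real

theorem hasDerivWithinAt_integral_Ici {f : ℝ → ℝ} {a x : ℝ} (hf : ContinuousOn f (Ici a))
    (hx : a ≤ x) : HasDerivWithinAt (fun T => ∫ t in a..T, f t) (f x) (Ici a) x := by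
  set g : ℝ → ℝ := fun t => f (max a t)
  have hg : Continuous g :=
    hf.comp_continuous (continuous_const.max continuous_id) fun t => le_max_left a t
  have hfg : ∀ T ∈ Ici a, ∫ t in a..T, g t = ∫ t in a..T, f t := fun T hT =>
    intervalIntegral.integral_congr fun t ht => by
      rw [uIcc_of_le hT] at ht
      simp [g, max_eq_right ht.1]
  have hgx : g x = f x := by simp [g, max_eq_right hx]
  exact hgx ▸ (hg.integral_hasStrictDerivAt a x).hasDerivAt.hasDerivWithinAt.congr
    (fun T hT => (hfg T hT).symm) (hfg x hx).symm

theorem monotoneOn_Ici_of_hasDerivWithinAt_nonneg {f f' : ℝ → ℝ} {a : ℝ}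
    (hf : ∀ x ∈ Ici a, HasDerivWithinAt f (f' x) (Ici a) x) (hf' : ∀ x ∈ Ioi a, 0 ≤ f' x) :
    MonotoneOn f (Ici a) := by
  refine monotoneOn_of_hasDerivWithinAt_nonneg (convex_Ici a)
    (fun x hx => (hf x hx).continuousWithinAt) (fun x hx => ?_) (by simpa using hf')
  rw [interior_Ici] at hx ⊢
  exact ((hf x (Ioi_subset_Ici_self hx)).hasDerivAt (Ici_mem_nhds hx)).hasDerivWithinAt

theorem nonneg_of_hasDerivWithinAt_Ici_of_add_mul_nonneg {f f' : ℝ → ℝ} {a r : ℝ}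
    (hf : ∀ x ∈ Ici a, HasDerivWithinAt f (f' x) (Ici a) x) (ha : 0 ≤ f a)
    (bound : ∀ x ∈ Ici a, 0 ≤ f' x + r * f x) {x : ℝ} (hx : a ≤ x) : 0 ≤ f x := by
  have hneg : ∀ y ∈ Ico a x, HasDerivWithinAt (-f) (-f' y) (Ici y) y := fun y hy =>
    ((hf y hy.1).mono (Ici_subset_Ici.2 hy.1)).neg
  have key := le_gronwallBound_of_liminf_deriv_right_le (δ := 0) (K := -r) (ε := 0)
    (fun y hy => ((hf y hy.1).continuousWithinAt.mono Icc_subset_Ici_self).neg)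
    (fun y hy _ hr => (hneg y hy).liminf_right_slope_le hr) (by simpa using ha)
    (fun y hy => by have := bound y hy.1; simp only [Pi.neg_apply]; linarith) x ⟨hx, le_rfl⟩
  simpa [gronwallBound_ε0_δ0] using key

theorem integral_one_sub {g : ℝ → ℝ} {a b : ℝ} (hg : IntervalIntegrable g volume a b) :
    ∫ t in a..b, (1 - g t) = (b - a) - ∫ t in a..b, g t := by
  simp [intervalIntegral.integral_sub intervalIntegrable_const hg]

theorem mul_integral_exp_neg_mul (r T : ℝ) :
    r * ∫ t in (0 : ℝ)..T, exp (-r * t) = 1 - exp (-r * T) := by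
  have hderiv : ∀ t ∈ uIcc 0 T, HasDerivAt (fun t => -exp (-r * t)) (r * exp (-r * t)) t :=
    fun t _ => ((hasDerivAt_id t).const_mul (-r)).exp.neg.congr_deriv
      (by simp only [id_eq, neg_mul, mul_one, mul_neg, neg_neg]; ring)
  rw [← intervalIntegral.integral_const_mul, intervalIntegral.integral_eq_sub_of_hasDerivAt
    hderiv ((continuous_const.mul (by fun_prop)).intervalIntegrable _ _)]
  simp only [neg_mul, mul_zero, exp_zero, sub_neg_eq_add]
  ring

/-- `∫₀ᵀ e^{-rt} dt` solves `u' + r u = 1`, `u 0 = 0`, so Grönwall applies to the difference. -/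
theorem integral_exp_neg_mul_le_integral {S : ℝ → ℝ} {r T : ℝ} (hS : ContinuousOn S (Ici 0))
    (h : ∀ t ∈ Ici (0 : ℝ), 1 ≤ S t + r * ∫ s in (0 : ℝ)..t, S s) (hT : 0 ≤ T) :
    ∫ t in (0 : ℝ)..T, exp (-r * t) ≤ ∫ t in (0 : ℝ)..T, S t := by
  have hexp : ContinuousOn (fun t => exp (-r * t)) (Ici 0) := by fun_prop
  have hdiff := fun x (hx : x ∈ Ici (0 : ℝ)) =>
    (hasDerivWithinAt_integral_Ici hS hx).sub (hasDerivWithinAt_integral_Ici hexp hx)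
  refine sub_nonneg.1 (nonneg_of_hasDerivWithinAt_Ici_of_add_mul_nonneg (r := r) hdiff
    (by simp) (fun x hx => ?_) hT)
  have := mul_integral_exp_neg_mul r x
  simp only [Pi.sub_apply]
  linarith [h x hx]

theorem integral_exp_neg_div_mul_Ioi {a b : ℝ} (ha : 0 < a) (hb : 0 < b) :
    ∫ t in Ioi (0 : ℝ), exp (-(a / b) * t) = b / a := by
  rw [integral_exp_mul_Ioi (by simp; positivity)]
  field_simp
  simp only [mul_zero, zero_div, neg_zero, exp_zero]

theorem one_sub_contCDF_eq (p : ℝ → ℝ) (t : ℝ) :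
    1 - contCDF p t = exp (-∫ s in (0 : ℝ)..t, p s) := by
  simp [contCDF]

theorem one_sub_contCDF_nonneg (p : ℝ → ℝ) (t : ℝ) : 0 ≤ 1 - contCDF p t := by
  rw [one_sub_contCDF_eq]
  positivity

namespace ContFeasible

variable {c Ibar : ℝ} {p I : ℝ → ℝ}

theorem hasDerivWithinAt_one_sub_contCDF (h : ContFeasible c Ibar p I) {x : ℝ}
    (hx : x ∈ Ici 0) :
    HasDerivWithinAt (fun t => 1 - contCDF p t) (-p x * (1 - contCDF p x)) (Ici 0) x := by
  simp only [one_sub_contCDF_eq]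
  simpa [mul_comm] using (hasDerivWithinAt_integral_Ici h.1 hx).neg.exp

theorem continuousOn_one_sub_contCDF (h : ContFeasible c Ibar p I) :
    ContinuousOn (fun t => 1 - contCDF p t) (Ici 0) :=
  fun _ hx => (h.hasDerivWithinAt_one_sub_contCDF hx).continuousWithinAt

theorem one_le_one_sub_contCDF_add_mul_integral (h : ContFeasible c Ibar p I) (hIbar : 0 < Ibar)
    {T : ℝ} (hT : T ∈ Ici 0) :
    1 ≤ (1 - contCDF p T) + c / Ibar * ∫ t in (0 : ℝ)..T, (1 - contCDF p t) := by
  set S : ℝ → ℝ := fun t => 1 - contCDF p t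
  have hS := fun x (hx : x ∈ Ici (0 : ℝ)) => h.hasDerivWithinAt_one_sub_contCDF hx
  have hu := fun x (hx : x ∈ Ici (0 : ℝ)) =>
    hasDerivWithinAt_integral_Ici h.continuousOn_one_sub_contCDF hx
  obtain ⟨-, -, -, hI0, hI_nonneg, hI_diff, hI_deriv⟩ := h
  set H : ℝ → ℝ := fun t => (Ibar - I t) * S t + c * ∫ s in (0 : ℝ)..t, S s
  have hH : ∀ x ∈ Ici (0 : ℝ), HasDerivWithinAt H
      ((c - derivWithin I (Ici 0) x - p x * (Ibar - I x)) * S x) (Ici 0) x := fun x hx =>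
    (((hI_diff x hx).hasDerivWithinAt.const_sub Ibar).mul (hS x hx)).add
      ((hu x hx).const_mul c) |>.congr_deriv (by ring)
  have hH_mono := monotoneOn_Ici_of_hasDerivWithinAt_nonneg hH fun x hx =>
    mul_nonneg (by linarith [hI_deriv x (le_of_lt hx)]) (one_sub_contCDF_nonneg p x)
  have hH0 : H 0 = Ibar := by simp [H, S, hI0, contCDF]
  have hHT : Ibar ≤ H T := hH0 ▸ hH_mono self_mem_Ici hT hT
  have hST : 0 ≤ S T := one_sub_contCDF_nonneg p T
  rw [← mul_le_mul_iff_right₀ hIbar, mul_add, ← mul_assoc, mul_div_cancel₀ _ hIbar.ne']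
  nlinarith [hI_nonneg T hT]

theorem integral_contCDF_le (h : ContFeasible c Ibar p I) (hIbar : 0 < Ibar) {T : ℝ}
    (hT : 0 ≤ T) :
    ∫ t in (0 : ℝ)..T, contCDF p t ≤ ∫ t in (0 : ℝ)..T, (1 - exp (-(c / Ibar) * t)) := by
  have hS := h.continuousOn_one_sub_contCDF
  have hle := integral_exp_neg_mul_le_integral hS
    (fun t ht => h.one_le_one_sub_contCDF_add_mul_integral hIbar ht) hT
  have hP := integral_one_sub (hS.mono (uIcc_of_le hT ▸ Icc_subset_Ici_self)).intervalIntegrable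
  simp only [sub_sub_cancel] at hP
  have hE := integral_one_sub (g := fun t => exp (-(c / Ibar) * t))
    (Continuous.intervalIntegrable (by fun_prop) 0 T)
  linarith

end ContFeasible

/-- For every continuous feasible strategy, `∫_0^T P(t) dt ≤ ∫_0^T (1 − e^{−(c/Ī)t}) dt`
for all `T ≥ 0`; in particular an exhaustive strategy (expected stopping time
`∫_0^∞ (1 − P(t)) dt = Ī/c`) has the same mean as the exponential distribution with
rate `c/Ī`, so the exponential distribution is a mean-preserving spread of its
stopping time distribution (second-order stochastic dominance). -/
theorem cont_CDF_integral_le_exponential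
    (c Ibar : ℝ) (hc : 0 < c) (hcI : c < Ibar)
    (p I : ℝ → ℝ) (hfeas : ContFeasible c Ibar p I) :
    (∀ T : ℝ, 0 ≤ T →
      ∫ t in (0:ℝ)..T, contCDF p t ≤ ∫ t in (0:ℝ)..T, (1 - Real.exp (-(c / Ibar) * t))) ∧
    ((∫ t in Set.Ioi (0:ℝ), (1 - contCDF p t)) = Ibar / c →
      ((∫ t in Set.Ioi (0:ℝ), (1 - contCDF p t)) =
          ∫ t in Set.Ioi (0:ℝ), Real.exp (-(c / Ibar) * t) ∧
        ∀ T : ℝ, 0 ≤ T →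
          ∫ t in (0:ℝ)..T, contCDF p t ≤
            ∫ t in (0:ℝ)..T, (1 - Real.exp (-(c / Ibar) * t)))) := by
  have hIbar : 0 < Ibar := hc.trans hcI
  have hle := fun T (hT : 0 ≤ T) => hfeas.integral_contCDF_le hIbar hT
  exact ⟨hle, fun hE => ⟨hE.trans (integral_exp_neg_div_mul_Ioi hc hIbar).symm, hle⟩⟩
end

section
/- Let p : [0,∞) → [0,∞) be continuous and integrable, and define I(t) = ∫_0^t exp(∫_τ^t p(s) ds)·(c − Ī·p(τ)) dτ. For any h > 0 and any natural number k, set p̂_k = 1 − exp(−∫_{kh}^{(k+1)h} p(s) ds) and Î_k = I(kh). Then (Ī − Î_k)·p̂_k + (Î_{k+1} − Î_k)·(1 − p̂_k) ≤ c·h. -/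
/-!
Write `w τ = exp (-∫_{kh}^τ p)`. Discounting the variation-of-constants formula for `I` from
`(k+1)h` back to `kh` gives `w((k+1)h) Î_{k+1} = Î_k + ∫_{kh}^{(k+1)h} w (c - Ī p)`, and since
`p w = -w'` the `Ī`-part integrates to `Ī (1 - w((k+1)h)) = Ī p̂_k`. So the left-hand side equals
`c ∫_{kh}^{(k+1)h} w`, which is at most `c h` because `p ≥ 0` forces `w ≤ 1`.
-/

open MeasureTheory

open Set Real intervalIntegral

/-- The solution of `x' = p x + f` with `x t₀ = 0`. -/
noncomputable def variationOfConstants (p f : ℝ → ℝ) (t₀ t : ℝ) : ℝ :=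
  ∫ τ in t₀..t, exp (∫ s in τ..t, p s) * f τ

section

variable {p f : ℝ → ℝ} {t₀ a b : ℝ}

theorem exp_neg_integral_mul_variationOfConstants (hp : IntervalIntegrable p volume t₀ b)
    (hf : IntervalIntegrable f volume t₀ b) (ha : a ∈ uIcc t₀ b) :
    exp (-∫ s in a..b, p s) * variationOfConstants p f t₀ b =
      variationOfConstants p f t₀ a + ∫ τ in a..b, exp (-∫ s in a..τ, p s) * f τ := by
  have hb : b ∈ uIcc t₀ b := right_mem_uIcc
  have hp' : ∀ {u v}, u ∈ uIcc t₀ b → v ∈ uIcc t₀ b → IntervalIntegrable p volume u v :=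
    fun hu hv => hp.mono_set (uIcc_subset_uIcc hu hv)
  have hg : IntervalIntegrable (fun τ => exp (-∫ s in a..τ, p s) * f τ) volume t₀ b :=
    hf.continuousOn_mul (continuousOn_primitive_interval' hp ha).neg.rexp
  have hg' : ∀ {u v}, u ∈ uIcc t₀ b → v ∈ uIcc t₀ b →
      IntervalIntegrable (fun τ => exp (-∫ s in a..τ, p s) * f τ) volume u v :=
    fun hu hv => hg.mono_set (uIcc_subset_uIcc hu hv)
  have discount : exp (-∫ s in a..b, p s) * variationOfConstants p f t₀ b =
      ∫ τ in t₀..b, exp (-∫ s in a..τ, p s) * f τ := by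
    rw [variationOfConstants, ← intervalIntegral.integral_const_mul]
    refine integral_congr fun τ hτ => ?_
    rw [← integral_interval_sub_left (hp' ha hb) (hp' ha hτ), ← mul_assoc, ← exp_add]
    ring_nf
  rw [discount, ← integral_add_adjacent_intervals (hg' left_mem_uIcc ha) (hg' ha hb),
    variationOfConstants]
  congr 1
  refine integral_congr fun τ _ => ?_
  rw [integral_symm, neg_neg]

theorem integral_mul_exp_neg_integral (hab : a ≤ b) (hp : ContinuousOn p (Icc a b)) :
    ∫ τ in a..b, p τ * exp (-∫ s in a..τ, p s) = 1 - exp (-∫ s in a..b, p s) := by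
  have hp_int : IntervalIntegrable p volume a b := hp.intervalIntegrable_of_Icc hab
  have hF : ContinuousOn (fun τ => exp (-∫ s in a..τ, p s)) (Icc a b) := by
    rw [← uIcc_of_le hab]
    exact (continuousOn_primitive_interval' hp_int left_mem_uIcc).neg.rexp
  have hderiv : ∀ x ∈ Ioo a b,
      HasDerivAt (fun τ => -exp (-∫ s in a..τ, p s)) (p x * exp (-∫ s in a..x, p s)) x := by
    intro x hx
    have hpx : HasDerivAt (fun τ => ∫ s in a..τ, p s) (p x) x :=
      integral_hasDerivAt_right (hp_int.mono_set (uIcc_subset_uIcc left_mem_uIcc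
        (by rw [uIcc_of_le hab]; exact Ioo_subset_Icc_self hx)))
        ((hp.mono Ioo_subset_Icc_self).stronglyMeasurableAtFilter isOpen_Ioo x hx)
        (hp.continuousAt (Icc_mem_nhds hx.1 hx.2))
    have h := hpx.fun_neg.exp.fun_neg
    rwa [mul_neg, neg_neg, mul_comm] at h
  rw [integral_eq_sub_of_hasDerivAt_of_le hab hF.neg hderiv
    ((hp.mul hF).intervalIntegrable_of_Icc hab)]
  simp only [Pi.neg_apply, integral_same, neg_zero, exp_zero]
  ring

theorem integral_exp_neg_integral_le (hab : a ≤ b) (hp : ContinuousOn p (Icc a b))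
    (hp_nonneg : ∀ s ∈ Icc a b, 0 ≤ p s) :
    ∫ τ in a..b, exp (-∫ s in a..τ, p s) ≤ b - a := by
  have hp_int : IntervalIntegrable p volume a b := hp.intervalIntegrable_of_Icc hab
  have hF : ContinuousOn (fun τ => exp (-∫ s in a..τ, p s)) (uIcc a b) :=
    (continuousOn_primitive_interval' hp_int left_mem_uIcc).neg.rexp
  calc ∫ τ in a..b, exp (-∫ s in a..τ, p s)
      ≤ ∫ _ in a..b, (1 : ℝ) := by
        refine integral_mono_on hab hF.intervalIntegrable intervalIntegrable_const
          fun τ hτ => exp_le_one_iff.mpr (neg_nonpos.mpr ?_)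
        exact integral_nonneg hτ.1 fun s hs => hp_nonneg s ⟨hs.1, hs.2.trans hτ.2⟩
    _ = b - a := by simp

theorem discrete_flow_eq_mul_integral_exp_neg_integral {c Ibar : ℝ} {I : ℝ → ℝ}
    (hI : ∀ t, I t = variationOfConstants p (fun τ => c - Ibar * p τ) t₀ t) (ha : t₀ ≤ a)
    (hab : a ≤ b) (hp : ContinuousOn p (Icc t₀ b)) :
    (Ibar - I a) * (1 - exp (-∫ s in a..b, p s)) + (I b - I a) * exp (-∫ s in a..b, p s) =
      c * ∫ τ in a..b, exp (-∫ s in a..τ, p s) := by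
  rw [hI a, hI b]
  have hp_ab : ContinuousOn p (Icc a b) := hp.mono (Icc_subset_Icc_left ha)
  have hw : ContinuousOn (fun τ => exp (-∫ s in a..τ, p s)) (uIcc a b) :=
    (continuousOn_primitive_interval' (hp_ab.intervalIntegrable_of_Icc hab) left_mem_uIcc).neg.rexp
  have hpw : IntervalIntegrable (fun τ => p τ * exp (-∫ s in a..τ, p s)) volume a b :=
    (hp_ab.intervalIntegrable_of_Icc hab).mul_continuousOn hw
  have hsplit := exp_neg_integral_mul_variationOfConstants (f := fun τ => c - Ibar * p τ)
    (hp.intervalIntegrable_of_Icc (ha.trans hab))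
    ((continuousOn_const.sub (continuousOn_const.mul hp)).intervalIntegrable_of_Icc (ha.trans hab))
    (show a ∈ uIcc t₀ b by rw [uIcc_of_le (ha.trans hab)]; exact ⟨ha, hab⟩)
  have hforce : ∫ τ in a..b, exp (-∫ s in a..τ, p s) * (c - Ibar * p τ) =
      c * (∫ τ in a..b, exp (-∫ s in a..τ, p s)) - Ibar * (1 - exp (-∫ s in a..b, p s)) := by
    rw [← integral_mul_exp_neg_integral hab hp_ab, ← intervalIntegral.integral_const_mul,
      ← intervalIntegral.integral_const_mul, ← integral_sub (hw.intervalIntegrable.const_mul c)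
      (hpw.const_mul Ibar)]
    exact integral_congr fun τ _ => by ring
  linear_combination hsplit + hforce

end

theorem discretization_feasible_general
    (c Ibar : ℝ) (hc : 0 < c)
    (p : ℝ → ℝ) (hpc : ContinuousOn p (Set.Ici 0))
    (hp0 : ∀ s, 0 ≤ s → 0 ≤ p s)
    (I : ℝ → ℝ)
    (hI : ∀ t : ℝ, I t = ∫ τ in (0:ℝ)..t, Real.exp (∫ s in τ..t, p s) * (c - Ibar * p τ))
    (h : ℝ) (hh : 0 < h) (k : ℕ) :
    (Ibar - I ((k : ℝ) * h)) *
        (1 - Real.exp (-(∫ s in ((k : ℝ) * h)..(((k : ℝ) + 1) * h), p s))) +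
      (I (((k : ℝ) + 1) * h) - I ((k : ℝ) * h)) *
        (1 - (1 - Real.exp (-(∫ s in ((k : ℝ) * h)..(((k : ℝ) + 1) * h), p s)))) ≤
    c * h := by
  have ha : (0 : ℝ) ≤ k * h := by positivity
  have hab : (k : ℝ) * h ≤ (k + 1) * h := by nlinarith
  rw [sub_sub_cancel, discrete_flow_eq_mul_integral_exp_neg_integral hI ha hab
    (hpc.mono Icc_subset_Ici_self)]
  calc c * ∫ τ in (k : ℝ) * h..(k + 1) * h, exp (-∫ s in (k : ℝ) * h..τ, p s)
      ≤ c * ((k + 1) * h - k * h) :=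
        mul_le_mul_of_nonneg_left (integral_exp_neg_integral_le hab
          (hpc.mono fun s hs => ha.trans hs.1) fun s hs => hp0 s (ha.trans hs.1)) hc.le
    _ = c * h := by ring

/-- Discretization step: sampling a continuous-time feasible strategy with
intensity `p` and accumulated information
`I(t) = ∫_0^t exp(∫_τ^t p(s) ds)·(c − Ī·p(τ)) dτ` on a grid of mesh `h > 0`
yields sequences `p̂_k = 1 − exp(−∫_{kh}^{(k+1)h} p)`, `Î_k = I(kh)` satisfying
the discrete capacity constraint with capacity `c·h`. -/
theorem discretization_feasible
    (c Ibar : ℝ) (hc : 0 < c) (hcI : c < Ibar)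
    (p : ℝ → ℝ) (hpc : ContinuousOn p (Set.Ici 0))
    (hpint : IntegrableOn p (Set.Ici 0))
    (hp0 : ∀ s, 0 ≤ s → 0 ≤ p s)
    (I : ℝ → ℝ)
    (hI : ∀ t : ℝ, I t = ∫ τ in (0:ℝ)..t, Real.exp (∫ s in τ..t, p s) * (c - Ibar * p τ))
    (h : ℝ) (hh : 0 < h) (k : ℕ) :
    (Ibar - I ((k : ℝ) * h)) *
        (1 - Real.exp (-(∫ s in ((k : ℝ) * h)..(((k : ℝ) + 1) * h), p s))) +
      (I (((k : ℝ) + 1) * h) - I ((k : ℝ) * h)) *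
        (1 - (1 - Real.exp (-(∫ s in ((k : ℝ) * h)..(((k : ℝ) + 1) * h), p s)))) ≤
    c * h :=
  discretization_feasible_general c Ibar hc p hpc hp0 I hI h hh k
end
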